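/- arXiv:2407.20068 — 11 statements merged into one kernel-verified Lean document; each statement's English description precedes it below -/
import Mathlib

section
/- Let f₁ : ℝ → ℝ be strictly positive, measurable and integrable, and let F₂ : ℝ → ℝ be nondecreasing with 0 ≤ F₂(x) ≤ 1 and F₂(x) < 1 for all x. Suppose there exist constants k₁, k₂ ≥ 0 such that for all x, b ∈ ℝ: |ln f₁(x) − ln f₁(x+b)| ≤ k₁·|b| and |ln(1 − F₂(x)) − ln(1 − F₂(x+b))| ≤ k₂·|b|. Let Δ > 0, let S⊥ and S⊤ be disjoint finite index sets, let T, q, q' be real-valued functions on S⊥ ∪ S⊤ with |q(i) − q'(i)| ≤ Δ for every i. Then I(q) ≤ exp(k₁·Δ + 2·k₂·Δ·|S⊤|) · I(q'), where for a query function u the SVT output probability is I(u) = ∫_ℝ f₁(t) · ∏_{i∈S⊥} F₂(T(i)+t−u(i)) · ∏_{j∈S⊤} (1 − F₂(T(j)+t−u(j))) dt. -/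
/-!
Substituting `t = s - Δ` in the integral for `q`, it suffices to compare the integrands pointwise.
Moving the density by `Δ` costs `exp (k₁ Δ)`. Since `q' i - q i ≤ Δ`, each negatively answered
factor `F₂ (T i + s - Δ - q i)` is at most `F₂ (T i + s - q' i)` by monotonicity, while in each
positively answered factor `1 - F₂` the argument moves by at most `2 Δ`, costing `exp (2 k₂ Δ)`.
-/

open MeasureTheory Real

theorem le_exp_mul_of_abs_log_sub_log_le {f : ℝ → ℝ} {k : ℝ} (hf : ∀ x, 0 < f x)
    (hlip : ∀ x b : ℝ, |log (f x) - log (f (x + b))| ≤ k * |b|) (x y : ℝ) :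
    f x ≤ exp (k * |y - x|) * f y := by
  have h := (abs_le.mp (hlip x (y - x))).2
  rw [add_sub_cancel] at h
  calc f x = exp (log (f x)) := (exp_log (hf x)).symm
    _ ≤ exp (k * |y - x| + log (f y)) := exp_le_exp.mpr (by linarith)
    _ = exp (k * |y - x|) * f y := by rw [exp_add, exp_log (hf y)]

theorem integral_le_mul_integral_of_le_shift {f g : ℝ → ℝ} {c : ℝ} (Δ : ℝ)
    (hf : Integrable f) (hg : Integrable g) (h : ∀ s, f (s - Δ) ≤ c * g s) :
    ∫ t, f t ≤ c * ∫ t, g t :=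
  calc ∫ t, f t = ∫ s, f (s - Δ) := (integral_sub_right_eq_self f Δ).symm
    _ ≤ ∫ s, c * g s := integral_mono (hf.comp_sub_right Δ) (hg.const_mul c) h
    _ = c * ∫ t, g t := integral_const_mul c g

section SVT

variable {ι : Type*} (F : ℝ → ℝ) (Sbot Stop : Finset ι) (T : ι → ℝ)

/-- Probability, given threshold noise `t`, that the queries in `Sbot` are answered negatively and
those in `Stop` positively, when `F` is the CDF of the query noise and `u` gives the query values. -/
def svtAnswerProb (u : ι → ℝ) (t : ℝ) : ℝ :=
  (∏ i ∈ Sbot, F (T i + t - u i)) * ∏ j ∈ Stop, (1 - F (T j + t - u j))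

variable {F}

theorem svtAnswerProb_nonneg (h0 : ∀ x, 0 ≤ F x) (h1 : ∀ x, F x ≤ 1) (u : ι → ℝ) (t : ℝ) :
    0 ≤ svtAnswerProb F Sbot Stop T u t :=
  mul_nonneg (Finset.prod_nonneg fun _ _ => h0 _)
    (Finset.prod_nonneg fun _ _ => sub_nonneg.mpr (h1 _))

theorem svtAnswerProb_le_one (h0 : ∀ x, 0 ≤ F x) (h1 : ∀ x, F x ≤ 1) (u : ι → ℝ) (t : ℝ) :
    svtAnswerProb F Sbot Stop T u t ≤ 1 :=
  mul_le_one₀ (Finset.prod_le_one (fun _ _ => h0 _) fun _ _ => h1 _)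
    (Finset.prod_nonneg fun _ _ => sub_nonneg.mpr (h1 _))
    (Finset.prod_le_one (fun _ _ => sub_nonneg.mpr (h1 _)) fun _ _ => sub_le_self _ (h0 _))

theorem measurable_svtAnswerProb (hF : Measurable F) (u : ι → ℝ) :
    Measurable (svtAnswerProb F Sbot Stop T u) :=
  (Finset.measurable_prod _ fun i _ => hF.comp (by fun_prop)).mul
    (Finset.measurable_prod _ fun j _ => measurable_const.sub (hF.comp (by fun_prop)))

theorem svtAnswerProb_sub_le [DecidableEq ι] (hmono : Monotone F) (h0 : ∀ x, 0 ≤ F x)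
    (hlt1 : ∀ x, F x < 1) {k : ℝ} (hk : 0 ≤ k)
    (hlip : ∀ x b : ℝ, |log (1 - F x) - log (1 - F (x + b))| ≤ k * |b|)
    {Δ : ℝ} {q q' : ι → ℝ} (hsens : ∀ i ∈ Sbot ∪ Stop, |q i - q' i| ≤ Δ) (s : ℝ) :
    svtAnswerProb F Sbot Stop T q (s - Δ) ≤
      exp (2 * k * Δ * Stop.card) * svtAnswerProb F Sbot Stop T q' s := by
  have hpos : ∀ x, 0 < 1 - F x := fun x => sub_pos.mpr (hlt1 x)
  have hbot : ∏ i ∈ Sbot, F (T i + (s - Δ) - q i) ≤ ∏ i ∈ Sbot, F (T i + s - q' i) :=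
    Finset.prod_le_prod (fun i _ => h0 _) fun i hi => hmono <| by
      linarith [(abs_le.mp (hsens i (Finset.mem_union_left _ hi))).1]
  have htop : ∏ j ∈ Stop, (1 - F (T j + (s - Δ) - q j)) ≤
      ∏ j ∈ Stop, (exp (2 * k * Δ) * (1 - F (T j + s - q' j))) := by
    refine Finset.prod_le_prod (fun j _ => (hpos _).le) fun j hj => ?_
    have hshift : |T j + s - q' j - (T j + (s - Δ) - q j)| ≤ 2 * Δ := by
      have := abs_le.mp (hsens j (Finset.mem_union_right _ hj))
      rw [abs_le]; constructor <;> linarith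
    refine (le_exp_mul_of_abs_log_sub_log_le hpos hlip _ (T j + s - q' j)).trans ?_
    exact mul_le_mul_of_nonneg_right
      (exp_le_exp.mpr (by linarith [mul_le_mul_of_nonneg_left hshift hk])) (hpos _).le
  calc svtAnswerProb F Sbot Stop T q (s - Δ)
      ≤ (∏ i ∈ Sbot, F (T i + s - q' i)) *
          ∏ j ∈ Stop, (exp (2 * k * Δ) * (1 - F (T j + s - q' j))) :=
        mul_le_mul hbot htop (Finset.prod_nonneg fun j _ => (hpos _).le)
          (Finset.prod_nonneg fun i _ => h0 _)
    _ = exp (2 * k * Δ * Stop.card) * svtAnswerProb F Sbot Stop T q' s := by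
        rw [Finset.prod_mul_distrib, Finset.prod_const, ← exp_nat_mul, svtAnswerProb,
          mul_comm _ (2 * k * Δ)]
        ring

end SVT

theorem svt_privacy_nonmonotonic_general
    (f₁ F₂ : ℝ → ℝ)
    (hf_pos : ∀ x, 0 < f₁ x)
    (hf_int : Integrable f₁)
    (hF_mono : Monotone F₂)
    (hF_nonneg : ∀ x, 0 ≤ F₂ x)
    (hF_le_one : ∀ x, F₂ x ≤ 1)
    (hF_lt_one : ∀ x, F₂ x < 1)
    (k₁ k₂ : ℝ) (hk₂ : 0 ≤ k₂)
    (hlip₁ : ∀ x b : ℝ, |Real.log (f₁ x) - Real.log (f₁ (x + b))| ≤ k₁ * |b|)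
    (hlip₂ : ∀ x b : ℝ,
      |Real.log (1 - F₂ x) - Real.log (1 - F₂ (x + b))| ≤ k₂ * |b|)
    {ι : Type*} [DecidableEq ι] (Sbot Stop : Finset ι)
    (Δ : ℝ) (hΔ : 0 < Δ)
    (T q q' : ι → ℝ)
    (hsens : ∀ i ∈ Sbot ∪ Stop, |q i - q' i| ≤ Δ) :
    (∫ t : ℝ, f₁ t * ((∏ i ∈ Sbot, F₂ (T i + t - q i)) *
        ∏ j ∈ Stop, (1 - F₂ (T j + t - q j)))) ≤
      Real.exp (k₁ * Δ + 2 * k₂ * Δ * Stop.card) *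
      (∫ t : ℝ, f₁ t * ((∏ i ∈ Sbot, F₂ (T i + t - q' i)) *
        ∏ j ∈ Stop, (1 - F₂ (T j + t - q' j)))) := by
  set P := svtAnswerProb F₂ Sbot Stop T
  have hint : ∀ u, Integrable fun t => f₁ t * P u t := fun u =>
    hf_int.mul_bdd (measurable_svtAnswerProb Sbot Stop T hF_mono.measurable u).aestronglyMeasurable
      (ae_of_all _ fun t => by
        rw [norm_of_nonneg (svtAnswerProb_nonneg Sbot Stop T hF_nonneg hF_le_one u t)]
        exact svtAnswerProb_le_one Sbot Stop T hF_nonneg hF_le_one u t)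
  refine integral_le_mul_integral_of_le_shift Δ (hint q) (hint q') fun s => ?_
  have hf : f₁ (s - Δ) ≤ exp (k₁ * Δ) * f₁ s := by
    simpa [abs_of_pos hΔ] using le_exp_mul_of_abs_log_sub_log_le hf_pos hlip₁ (s - Δ) s
  calc f₁ (s - Δ) * P q (s - Δ)
      ≤ (exp (k₁ * Δ) * f₁ s) * (exp (2 * k₂ * Δ * Stop.card) * P q' s) :=
        mul_le_mul hf
          (svtAnswerProb_sub_le Sbot Stop T hF_mono hF_nonneg hF_lt_one hk₂ hlip₂ hsens s)
          (svtAnswerProb_nonneg Sbot Stop T hF_nonneg hF_le_one q _)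
          (mul_nonneg (exp_pos _).le (hf_pos s).le)
    _ = exp (k₁ * Δ + 2 * k₂ * Δ * Stop.card) * (f₁ s * P q' s) := by
        rw [exp_add]; ring

/-- Core DP inequality of SVT in the non-monotonic query setting. -/
theorem svt_privacy_nonmonotonic
    (f₁ F₂ : ℝ → ℝ)
    (hf_pos : ∀ x, 0 < f₁ x)
    (hf_meas : Measurable f₁)
    (hf_int : Integrable f₁)
    (hF_mono : Monotone F₂)
    (hF_nonneg : ∀ x, 0 ≤ F₂ x)
    (hF_le_one : ∀ x, F₂ x ≤ 1)
    (hF_lt_one : ∀ x, F₂ x < 1)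
    (k₁ k₂ : ℝ) (hk₁ : 0 ≤ k₁) (hk₂ : 0 ≤ k₂)
    (hlip₁ : ∀ x b : ℝ, |Real.log (f₁ x) - Real.log (f₁ (x + b))| ≤ k₁ * |b|)
    (hlip₂ : ∀ x b : ℝ,
      |Real.log (1 - F₂ x) - Real.log (1 - F₂ (x + b))| ≤ k₂ * |b|)
    {ι : Type*} [DecidableEq ι] (Sbot Stop : Finset ι) (hdisj : Disjoint Sbot Stop)
    (Δ : ℝ) (hΔ : 0 < Δ)
    (T q q' : ι → ℝ)
    (hsens : ∀ i ∈ Sbot ∪ Stop, |q i - q' i| ≤ Δ) :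
    (∫ t : ℝ, f₁ t * ((∏ i ∈ Sbot, F₂ (T i + t - q i)) *
        ∏ j ∈ Stop, (1 - F₂ (T j + t - q j)))) ≤
      Real.exp (k₁ * Δ + 2 * k₂ * Δ * Stop.card) *
      (∫ t : ℝ, f₁ t * ((∏ i ∈ Sbot, F₂ (T i + t - q' i)) *
        ∏ j ∈ Stop, (1 - F₂ (T j + t - q' j)))) :=
  svt_privacy_nonmonotonic_general f₁ F₂ hf_pos hf_int hF_mono hF_nonneg hF_le_one hF_lt_one k₁ k₂
    hk₂ hlip₁ hlip₂ Sbot Stop Δ hΔ T q q' hsens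
end

section
/- Let f₁ : ℝ → ℝ be strictly positive, measurable and integrable, and let F₂ : ℝ → ℝ be nondecreasing with 0 ≤ F₂(x) ≤ 1 and F₂(x) < 1 for all x. Suppose there exist constants k₁, k₂ ≥ 0 such that for all x, b ∈ ℝ: |ln f₁(x) − ln f₁(x+b)| ≤ k₁·|b| and |ln(1 − F₂(x)) − ln(1 − F₂(x+b))| ≤ k₂·|b|. Let Δ > 0, let S⊥ and S⊤ be disjoint finite index sets, let T, q, q' be real-valued functions on S⊥ ∪ S⊤ satisfying the monotone condition q'(i) − Δ ≤ q(i) ≤ q'(i) for every i. Then I(q) ≤ exp(k₁·Δ + k₂·Δ·|S⊤|) · I(q'), where for a query function u the SVT output probability is I(u) = ∫_ℝ f₁(t) · ∏_{i∈S⊥} F₂(T(i)+t−u(i)) · ∏_{j∈S⊤} (1 − F₂(T(j)+t−u(j))) dt. -/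
/-!
Substituting `t = s - Δ` in the integral for `q` shifts the threshold noise by `Δ`, which costs
a factor `exp (k₁ Δ)` in the density `f₁`. After the shift, each argument `T i + s - Δ - q i`
lies in `[T i + s - q' i - Δ, T i + s - q' i]`: the negatively answered factors `F₂` can only
grow (monotonicity), and each positively answered factor `1 - F₂` grows by at most
`exp (k₂ Δ)` (log-Lipschitz bound). Integrating this pointwise bound gives the theorem.
-/

open MeasureTheory Real

theorem le_exp_mul_of_abs_log_sub_le {g : ℝ → ℝ} {k : ℝ} (hg : ∀ x, 0 < g x)
    (hlip : ∀ x b : ℝ, |log (g x) - log (g (x + b))| ≤ k * |b|) (x : ℝ) {b : ℝ} (hb : 0 ≤ b) :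
    g x ≤ exp (k * b) * g (x + b) := by
  have hlog : log (g x) ≤ k * b + log (g (x + b)) := by
    have h := (abs_le.mp (hlip x b)).2
    rw [abs_of_nonneg hb] at h
    linarith
  calc g x = exp (log (g x)) := (exp_log (hg x)).symm
    _ ≤ exp (k * b + log (g (x + b))) := exp_le_exp.mpr hlog
    _ = exp (k * b) * g (x + b) := by rw [exp_add, exp_log (hg _)]

theorem Antitone.le_exp_mul_of_sub_le {G : ℝ → ℝ} {k Δ x y : ℝ} (hG : Antitone G)
    (hpos : ∀ x, 0 < G x) (hlip : ∀ x b : ℝ, |log (G x) - log (G (x + b))| ≤ k * |b|)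
    (hΔ : 0 ≤ Δ) (h : y - Δ ≤ x) : G x ≤ exp (k * Δ) * G y :=
  calc G x ≤ G (y - Δ) := hG h
    _ ≤ exp (k * Δ) * G (y - Δ + Δ) := le_exp_mul_of_abs_log_sub_le hpos hlip _ hΔ
    _ = exp (k * Δ) * G y := by rw [sub_add_cancel]

theorem Finset.prod_le_exp_mul_card_mul_prod {ι : Type*} {s : Finset ι} {f g : ι → ℝ} {c : ℝ}
    (hf : ∀ i ∈ s, 0 ≤ f i) (h : ∀ i ∈ s, f i ≤ exp c * g i) :
    ∏ i ∈ s, f i ≤ exp (c * s.card) * ∏ i ∈ s, g i :=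
  calc ∏ i ∈ s, f i ≤ ∏ i ∈ s, exp c * g i := Finset.prod_le_prod hf h
    _ = exp (c * s.card) * ∏ i ∈ s, g i := by
      rw [Finset.prod_mul_distrib, Finset.prod_const, mul_comm c, exp_nat_mul]

section SVT

variable {ι : Type*} (f₁ F₂ : ℝ → ℝ) (Sbot Stop : Finset ι) (T : ι → ℝ)

/-- The integrand of the SVT output probability `I(u)` for the query answers `u`. -/
noncomputable def svtIntegrand (u : ι → ℝ) (t : ℝ) : ℝ :=
  f₁ t * ((∏ i ∈ Sbot, F₂ (T i + t - u i)) * ∏ j ∈ Stop, (1 - F₂ (T j + t - u j)))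

variable {f₁ F₂}

theorem integrable_svtIntegrand (hf : Integrable f₁) (hF_meas : Measurable F₂)
    (hF_nonneg : ∀ x, 0 ≤ F₂ x) (hF_le_one : ∀ x, F₂ x ≤ 1) (u : ι → ℝ) :
    Integrable (svtIntegrand f₁ F₂ Sbot Stop T u) := by
  have hF_norm (x : ℝ) : ‖F₂ x‖ ≤ 1 := by
    rw [Real.norm_of_nonneg (hF_nonneg x)]; exact hF_le_one x
  have hG_norm (x : ℝ) : ‖1 - F₂ x‖ ≤ 1 :=
    abs_le.mpr ⟨by linarith [hF_le_one x], by linarith [hF_nonneg x]⟩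
  refine hf.mul_bdd (c := 1) (by fun_prop) (Filter.Eventually.of_forall fun t => ?_)
  rw [norm_mul, norm_prod, norm_prod]
  exact mul_le_one₀ (Finset.prod_le_one (fun _ _ => norm_nonneg _) fun _ _ => hF_norm _)
    (Finset.prod_nonneg fun _ _ => norm_nonneg _)
    (Finset.prod_le_one (fun _ _ => norm_nonneg _) fun _ _ => hG_norm _)

theorem svtIntegrand_sub_le {k₁ k₂ Δ : ℝ} {q q' : ι → ℝ} (hf_pos : ∀ x, 0 < f₁ x)
    (hlip₁ : ∀ x b : ℝ, |log (f₁ x) - log (f₁ (x + b))| ≤ k₁ * |b|)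
    (hF_mono : Monotone F₂) (hF_nonneg : ∀ x, 0 ≤ F₂ x) (hF_lt_one : ∀ x, F₂ x < 1)
    (hlip₂ : ∀ x b : ℝ, |log (1 - F₂ x) - log (1 - F₂ (x + b))| ≤ k₂ * |b|) (hΔ : 0 ≤ Δ)
    (hlo : ∀ i ∈ Sbot, q' i - Δ ≤ q i) (hhi : ∀ j ∈ Stop, q j ≤ q' j) (s : ℝ) :
    svtIntegrand f₁ F₂ Sbot Stop T q (s - Δ) ≤
      exp (k₁ * Δ + k₂ * Δ * Stop.card) * svtIntegrand f₁ F₂ Sbot Stop T q' s := by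
  have hG_pos : ∀ x, 0 < 1 - F₂ x := fun x => sub_pos.mpr (hF_lt_one x)
  have hG_anti : Antitone fun x => 1 - F₂ x := fun _ _ hxy => sub_le_sub_left (hF_mono hxy) 1
  have hdens : f₁ (s - Δ) ≤ exp (k₁ * Δ) * f₁ s := by
    simpa using le_exp_mul_of_abs_log_sub_le hf_pos hlip₁ (s - Δ) hΔ
  have hbot : ∏ i ∈ Sbot, F₂ (T i + (s - Δ) - q i) ≤ ∏ i ∈ Sbot, F₂ (T i + s - q' i) :=
    Finset.prod_le_prod (fun i _ => hF_nonneg _) fun i hi =>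
      hF_mono (by linarith [hlo i hi])
  have htop : ∏ j ∈ Stop, (1 - F₂ (T j + (s - Δ) - q j)) ≤
      exp (k₂ * Δ * Stop.card) * ∏ j ∈ Stop, (1 - F₂ (T j + s - q' j)) :=
    Finset.prod_le_exp_mul_card_mul_prod (fun j _ => (hG_pos _).le) fun j hj =>
      hG_anti.le_exp_mul_of_sub_le hG_pos hlip₂ hΔ (by linarith [hhi j hj])
  calc svtIntegrand f₁ F₂ Sbot Stop T q (s - Δ)
      ≤ exp (k₁ * Δ) * f₁ s * ((∏ i ∈ Sbot, F₂ (T i + s - q' i)) *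
          (exp (k₂ * Δ * Stop.card) * ∏ j ∈ Stop, (1 - F₂ (T j + s - q' j)))) := by
        have hbot_nonneg (x : ι → ℝ) (t : ℝ) : 0 ≤ ∏ i ∈ Sbot, F₂ (T i + t - x i) :=
          Finset.prod_nonneg fun i _ => hF_nonneg _
        have htop_nonneg : 0 ≤ ∏ j ∈ Stop, (1 - F₂ (T j + (s - Δ) - q j)) :=
          Finset.prod_nonneg fun j _ => (hG_pos _).le
        unfold svtIntegrand
        gcongr
        exacts [mul_nonneg (hbot_nonneg q _) htop_nonneg, mul_nonneg (exp_pos _).le (hf_pos s).le,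
          hbot_nonneg q' s]
    _ = exp (k₁ * Δ + k₂ * Δ * Stop.card) * svtIntegrand f₁ F₂ Sbot Stop T q' s := by
        rw [svtIntegrand, exp_add]; ring

end SVT

theorem svt_privacy_monotonic_general
    (f₁ F₂ : ℝ → ℝ)
    (hf_pos : ∀ x, 0 < f₁ x)
    (hf_int : Integrable f₁)
    (hF_mono : Monotone F₂)
    (hF_nonneg : ∀ x, 0 ≤ F₂ x)
    (hF_lt_one : ∀ x, F₂ x < 1)
    (k₁ k₂ : ℝ)
    (hlip₁ : ∀ x b : ℝ, |Real.log (f₁ x) - Real.log (f₁ (x + b))| ≤ k₁ * |b|)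
    (hlip₂ : ∀ x b : ℝ,
      |Real.log (1 - F₂ x) - Real.log (1 - F₂ (x + b))| ≤ k₂ * |b|)
    {ι : Type*} [DecidableEq ι] (Sbot Stop : Finset ι)
    (Δ : ℝ) (hΔ : 0 < Δ)
    (T q q' : ι → ℝ)
    (hmono_lo : ∀ i ∈ Sbot ∪ Stop, q' i - Δ ≤ q i)
    (hmono_hi : ∀ i ∈ Sbot ∪ Stop, q i ≤ q' i) :
    (∫ t : ℝ, f₁ t * ((∏ i ∈ Sbot, F₂ (T i + t - q i)) *
        ∏ j ∈ Stop, (1 - F₂ (T j + t - q j)))) ≤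
      Real.exp (k₁ * Δ + k₂ * Δ * Stop.card) *
      (∫ t : ℝ, f₁ t * ((∏ i ∈ Sbot, F₂ (T i + t - q' i)) *
        ∏ j ∈ Stop, (1 - F₂ (T j + t - q' j)))) := by
  have hint := integrable_svtIntegrand Sbot Stop T hf_int hF_mono.measurable hF_nonneg
    fun x => (hF_lt_one x).le
  have hpointwise := svtIntegrand_sub_le Sbot Stop T hf_pos hlip₁ hF_mono hF_nonneg
    hF_lt_one hlip₂ hΔ.le (fun i hi => hmono_lo i (Finset.mem_union_left _ hi))
    fun j hj => hmono_hi j (Finset.mem_union_right _ hj)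
  change ∫ t, svtIntegrand f₁ F₂ Sbot Stop T q t ≤
    exp (k₁ * Δ + k₂ * Δ * Stop.card) * ∫ t, svtIntegrand f₁ F₂ Sbot Stop T q' t
  calc ∫ t, svtIntegrand f₁ F₂ Sbot Stop T q t
      = ∫ s, svtIntegrand f₁ F₂ Sbot Stop T q (s - Δ) := (integral_sub_right_eq_self _ Δ).symm
    _ ≤ ∫ s, exp (k₁ * Δ + k₂ * Δ * Stop.card) * svtIntegrand f₁ F₂ Sbot Stop T q' s :=
      integral_mono ((hint q).comp_sub_right Δ) ((hint q').const_mul _) hpointwise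
    _ = exp (k₁ * Δ + k₂ * Δ * Stop.card) * ∫ s, svtIntegrand f₁ F₂ Sbot Stop T q' s :=
      integral_const_mul _ _

/-- Core DP inequality of SVT in the monotonic query setting. -/
theorem svt_privacy_monotonic
    (f₁ F₂ : ℝ → ℝ)
    (hf_pos : ∀ x, 0 < f₁ x)
    (hf_meas : Measurable f₁)
    (hf_int : Integrable f₁)
    (hF_mono : Monotone F₂)
    (hF_nonneg : ∀ x, 0 ≤ F₂ x)
    (hF_le_one : ∀ x, F₂ x ≤ 1)
    (hF_lt_one : ∀ x, F₂ x < 1)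
    (k₁ k₂ : ℝ) (hk₁ : 0 ≤ k₁) (hk₂ : 0 ≤ k₂)
    (hlip₁ : ∀ x b : ℝ, |Real.log (f₁ x) - Real.log (f₁ (x + b))| ≤ k₁ * |b|)
    (hlip₂ : ∀ x b : ℝ,
      |Real.log (1 - F₂ x) - Real.log (1 - F₂ (x + b))| ≤ k₂ * |b|)
    {ι : Type*} [DecidableEq ι] (Sbot Stop : Finset ι) (hdisj : Disjoint Sbot Stop)
    (Δ : ℝ) (hΔ : 0 < Δ)
    (T q q' : ι → ℝ)
    (hmono_lo : ∀ i ∈ Sbot ∪ Stop, q' i - Δ ≤ q i)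
    (hmono_hi : ∀ i ∈ Sbot ∪ Stop, q i ≤ q' i) :
    (∫ t : ℝ, f₁ t * ((∏ i ∈ Sbot, F₂ (T i + t - q i)) *
        ∏ j ∈ Stop, (1 - F₂ (T j + t - q j)))) ≤
      Real.exp (k₁ * Δ + k₂ * Δ * Stop.card) *
      (∫ t : ℝ, f₁ t * ((∏ i ∈ Sbot, F₂ (T i + t - q' i)) *
        ∏ j ∈ Stop, (1 - F₂ (T j + t - q' j)))) :=
  svt_privacy_monotonic_general f₁ F₂ hf_pos hf_int hF_mono hF_nonneg hF_lt_one k₁ k₂ hlip₁ hlip₂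
    Sbot Stop Δ hΔ T q q' hmono_lo hmono_hi
end

section
/- Let Δ, ε₁, ε₂ > 0 and let c ≥ 1 be a natural number. Define f₁(t) = (ε₁/(2Δ))·exp(−ε₁·|t|/Δ) (the Laplace density with scale Δ/ε₁) and F₂(x) = exp(−exp(−x/β)) with scale β = 2cΔ/ε₂ (the Gumbel CDF with location 0). Let S⊥ and S⊤ be disjoint finite index sets with |S⊤| ≤ c, and let T, q, q' be real-valued functions on S⊥ ∪ S⊤ with |q(i) − q'(i)| ≤ Δ for every i. Then I(q) ≤ exp(ε₁ + ε₂) · I(q'), where for a query function u the SVT output probability is I(u) = ∫_ℝ f₁(t) · ∏_{i∈S⊥} F₂(T(i)+t−u(i)) · ∏_{j∈S⊤} (1 − F₂(T(j)+t−u(j))) dt. -/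
/-!
Shift the threshold noise by `Δ`. The Laplace density loses at most a factor `exp ε₁` under the
shift. Every "below" factor `F₂ (T i + t - q i)` can only grow, since its argument increases by
`Δ + q' i - q i ≥ 0`. Every "above" factor `1 - F₂ (…)` sees its argument move by some
`s ∈ [0, 2Δ]`, and the Gumbel survival function satisfies `1 - G x ≤ exp (s / β) * (1 - G (x + s))`
because `G (x + s) = exp (-(e^{-s/β} e^{-x/β}))` and `y ↦ 1 - exp (-y)` is concave and vanishes at
`0`. Each of the at most `c` above-factors therefore costs `exp (2Δ / β) = exp (ε₂ / c)`.
-/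

open MeasureTheory Real

theorem integral_le_mul_integral_of_le_comp_add {G : Type*} [MeasurableSpace G] [AddGroup G]
    [MeasurableAdd G] {μ : Measure G} [μ.IsAddRightInvariant] {f g : G → ℝ} {C : ℝ} (a : G)
    (hf : 0 ≤ f) (hg : Integrable g μ) (hfg : ∀ x, f x ≤ C * g (x + a)) :
    ∫ x, f x ∂μ ≤ C * ∫ x, g x ∂μ :=
  calc ∫ x, f x ∂μ ≤ ∫ x, C * g (x + a) ∂μ :=
        integral_mono_of_nonneg (.of_forall hf) ((hg.comp_add_right a).const_mul C)
          (.of_forall hfg)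
    _ = C * ∫ x, g x ∂μ := by rw [integral_const_mul, integral_add_right_eq_self]

theorem Finset.prod_le_exp_mul_prod {ι : Type*} {s : Finset ι} {x y : ι → ℝ} {a b : ℝ}
    (hx : ∀ i ∈ s, 0 ≤ x i) (hxy : ∀ i ∈ s, x i ≤ exp a * y i) (hab : s.card * a ≤ b) :
    ∏ i ∈ s, x i ≤ exp b * ∏ i ∈ s, y i := by
  have hy : ∀ i ∈ s, 0 ≤ y i := fun i hi =>
    nonneg_of_mul_nonneg_right ((hx i hi).trans (hxy i hi)) (exp_pos a)
  calc ∏ i ∈ s, x i ≤ ∏ i ∈ s, exp a * y i := prod_le_prod hx hxy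
    _ = exp (s.card * a) * ∏ i ∈ s, y i := by rw [prod_mul_distrib, prod_const, exp_nat_mul]
    _ ≤ exp b * ∏ i ∈ s, y i := by gcongr; exact prod_nonneg hy

theorem mul_one_sub_exp_neg_le {a : ℝ} (y : ℝ) (ha₀ : 0 ≤ a) (ha₁ : a ≤ 1) :
    a * (1 - exp (-y)) ≤ 1 - exp (-(a * y)) := by
  have := convexOn_exp.2 (Set.mem_univ (-y)) (Set.mem_univ 0) ha₀ (sub_nonneg.2 ha₁)
    (add_sub_cancel a 1)
  simp only [smul_eq_mul, mul_zero, add_zero, exp_zero, mul_one, mul_neg] at this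
  linarith

noncomputable def laplacePDF (b x : ℝ) : ℝ := exp (-|x| / b) / (2 * b)

theorem laplacePDF_nonneg {b : ℝ} (hb : 0 ≤ b) (x : ℝ) : 0 ≤ laplacePDF b x := by
  unfold laplacePDF; positivity

theorem integral_laplacePDF {b : ℝ} (hb : 0 < b) : ∫ x, laplacePDF b x = 1 := by
  have hexp : ∀ x, laplacePDF b x = exp (-b⁻¹ * |x|) / (2 * b) := fun x => by
    rw [laplacePDF, neg_mul, ← div_eq_inv_mul, neg_div]
  simp_rw [hexp]
  rw [integral_comp_abs (f := fun y => exp (-b⁻¹ * y) / (2 * b)), integral_div,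
    integral_exp_mul_Ioi (neg_neg_of_pos (inv_pos.2 hb)), mul_zero, exp_zero]
  field_simp

theorem laplacePDF_le_exp_mul {b : ℝ} (hb : 0 < b) (x a : ℝ) :
    laplacePDF b x ≤ exp (|a| / b) * laplacePDF b (x + a) := by
  unfold laplacePDF
  rw [mul_div_assoc', ← exp_add]
  gcongr
  rw [← add_div, div_le_div_iff_of_pos_right hb]
  linarith [abs_add_le x a]

noncomputable def gumbelCDF (β x : ℝ) : ℝ := exp (-exp (-x / β))

theorem gumbelCDF_nonneg (β x : ℝ) : 0 ≤ gumbelCDF β x := (exp_pos _).le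

theorem gumbelCDF_le_one (β x : ℝ) : gumbelCDF β x ≤ 1 :=
  exp_le_one_iff.2 (neg_nonpos.2 (exp_pos _).le)

theorem gumbelCDF_monotone {β : ℝ} (hβ : 0 ≤ β) : Monotone (gumbelCDF β) := fun _ _ _ => by
  unfold gumbelCDF; gcongr

theorem one_sub_gumbelCDF_le {β s : ℝ} (hβ : 0 < β) (hs : 0 ≤ s) (x : ℝ) :
    1 - gumbelCDF β x ≤ exp (s / β) * (1 - gumbelCDF β (x + s)) := by
  set a := exp (-s / β)
  have ha₁ : a ≤ 1 := exp_le_one_iff.2 (div_nonpos_of_nonpos_of_nonneg (neg_nonpos.2 hs) hβ.le)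
  have hshift : gumbelCDF β (x + s) = exp (-(a * exp (-x / β))) := by
    rw [gumbelCDF, ← exp_add]; ring_nf
  have hinv : exp (s / β) * a = 1 := by rw [← exp_add]; ring_nf; exact exp_zero
  calc 1 - gumbelCDF β x = exp (s / β) * (a * (1 - exp (-exp (-x / β)))) := by
        rw [← mul_assoc, hinv, one_mul, gumbelCDF]
    _ ≤ exp (s / β) * (1 - gumbelCDF β (x + s)) := by
        rw [hshift]; gcongr; exact mul_one_sub_exp_neg_le _ (exp_pos _).le ha₁

section SparseVector

variable {ι : Type*} (F : ℝ → ℝ) (Sbot Stop : Finset ι) (T : ι → ℝ)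

/-- Probability, given threshold noise `t`, that the noisy queries `u i + noise` fall below their
thresholds `T i + t` exactly on `Sbot` and above them on `Stop`, for query noise with CDF `F`. -/
noncomputable def svtCondProb (u : ι → ℝ) (t : ℝ) : ℝ :=
  (∏ i ∈ Sbot, F (T i + t - u i)) * ∏ j ∈ Stop, (1 - F (T j + t - u j))

variable {F Sbot Stop T}

theorem svtCondProb_nonneg (hF₀ : ∀ x, 0 ≤ F x) (hF₁ : ∀ x, F x ≤ 1) (u : ι → ℝ) (t : ℝ) :
    0 ≤ svtCondProb F Sbot Stop T u t :=
  mul_nonneg (Finset.prod_nonneg fun _ _ => hF₀ _)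
    (Finset.prod_nonneg fun _ _ => sub_nonneg.2 (hF₁ _))

theorem svtCondProb_le_one (hF₀ : ∀ x, 0 ≤ F x) (hF₁ : ∀ x, F x ≤ 1) (u : ι → ℝ) (t : ℝ) :
    svtCondProb F Sbot Stop T u t ≤ 1 :=
  mul_le_one₀ (Finset.prod_le_one (fun _ _ => hF₀ _) fun _ _ => hF₁ _)
    (Finset.prod_nonneg fun _ _ => sub_nonneg.2 (hF₁ _))
    (Finset.prod_le_one (fun _ _ => sub_nonneg.2 (hF₁ _)) fun _ _ => sub_le_self _ (hF₀ _))

theorem measurable_svtCondProb (hF : Measurable F) (u : ι → ℝ) :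
    Measurable (svtCondProb F Sbot Stop T u) := by
  unfold svtCondProb; fun_prop

theorem svtCondProb_le_exp_mul_comp_add [DecidableEq ι] {Δ γ ε : ℝ} {q q' : ι → ℝ}
    (hF_mono : Monotone F) (hF₁ : ∀ x, F x ≤ 1) (hF₀ : ∀ x, 0 ≤ F x)
    (hsurv : ∀ x s, 0 ≤ s → s ≤ 2 * Δ → 1 - F x ≤ exp γ * (1 - F (x + s)))
    (hγ : Stop.card * γ ≤ ε) (hsens : ∀ i ∈ Sbot ∪ Stop, |q i - q' i| ≤ Δ) (t : ℝ) :
    svtCondProb F Sbot Stop T q t ≤ exp ε * svtCondProb F Sbot Stop T q' (t + Δ) := by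
  have hbot : ∏ i ∈ Sbot, F (T i + t - q i) ≤ ∏ i ∈ Sbot, F (T i + (t + Δ) - q' i) :=
    Finset.prod_le_prod (fun _ _ => hF₀ _) fun i hi => hF_mono <| by
      linarith [(abs_le.1 (hsens i (Finset.mem_union_left _ hi))).1]
  have htop : ∏ j ∈ Stop, (1 - F (T j + t - q j)) ≤
      exp ε * ∏ j ∈ Stop, (1 - F (T j + (t + Δ) - q' j)) := by
    refine Finset.prod_le_exp_mul_prod (fun j _ => sub_nonneg.2 (hF₁ _)) (fun j hj => ?_) hγ
    obtain ⟨hlo, hhi⟩ := abs_le.1 (hsens j (Finset.mem_union_right _ hj))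
    convert hsurv (T j + t - q j) (Δ + q j - q' j) (by linarith) (by linarith) using 4
    ring
  calc svtCondProb F Sbot Stop T q t
      ≤ (∏ i ∈ Sbot, F (T i + (t + Δ) - q' i)) *
          (exp ε * ∏ j ∈ Stop, (1 - F (T j + (t + Δ) - q' j))) :=
        mul_le_mul hbot htop (Finset.prod_nonneg fun _ _ => sub_nonneg.2 (hF₁ _))
          (Finset.prod_nonneg fun _ _ => hF₀ _)
    _ = exp ε * svtCondProb F Sbot Stop T q' (t + Δ) := by unfold svtCondProb; ring

theorem integral_mul_svtCondProb_le [DecidableEq ι] {f : ℝ → ℝ} {Δ ε₁ ε₂ γ : ℝ} {q q' : ι → ℝ}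
    (hf₀ : 0 ≤ f) (hf_int : Integrable f) (hf_shift : ∀ t, f t ≤ exp ε₁ * f (t + Δ))
    (hF_mono : Monotone F) (hF₁ : ∀ x, F x ≤ 1) (hF₀ : ∀ x, 0 ≤ F x)
    (hsurv : ∀ x s, 0 ≤ s → s ≤ 2 * Δ → 1 - F x ≤ exp γ * (1 - F (x + s)))
    (hγ : Stop.card * γ ≤ ε₂) (hsens : ∀ i ∈ Sbot ∪ Stop, |q i - q' i| ≤ Δ) :
    ∫ t, f t * svtCondProb F Sbot Stop T q t ≤
      exp (ε₁ + ε₂) * ∫ t, f t * svtCondProb F Sbot Stop T q' t := by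
  refine integral_le_mul_integral_of_le_comp_add Δ
    (fun t => mul_nonneg (hf₀ t) (svtCondProb_nonneg hF₀ hF₁ q t)) ?_ fun t => ?_
  · refine hf_int.mul_bdd (c := 1)
      (measurable_svtCondProb hF_mono.measurable q').aestronglyMeasurable (.of_forall fun t => ?_)
    rw [norm_of_nonneg (svtCondProb_nonneg hF₀ hF₁ q' t)]
    exact svtCondProb_le_one hF₀ hF₁ q' t
  · calc f t * svtCondProb F Sbot Stop T q t
        ≤ (exp ε₁ * f (t + Δ)) * (exp ε₂ * svtCondProb F Sbot Stop T q' (t + Δ)) :=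
          mul_le_mul (hf_shift t)
            (svtCondProb_le_exp_mul_comp_add hF_mono hF₁ hF₀ hsurv hγ hsens t)
            (svtCondProb_nonneg hF₀ hF₁ q t) (mul_nonneg (exp_pos _).le (hf₀ _))
      _ = exp (ε₁ + ε₂) * (f (t + Δ) * svtCondProb F Sbot Stop T q' (t + Δ)) := by
          rw [exp_add]; ring

end SparseVector

theorem svt_gum_privacy_general
    (Δ ε₁ ε₂ : ℝ) (hΔ : 0 < Δ) (hε₁ : 0 < ε₁) (hε₂ : 0 < ε₂)
    (c : ℕ) (hc : 1 ≤ c)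
    (f₁ F₂ : ℝ → ℝ)
    (hf₁ : ∀ t : ℝ, f₁ t = (ε₁ / (2 * Δ)) * Real.exp (-(ε₁ * |t|) / Δ))
    (hF₂ : ∀ x : ℝ, F₂ x =
      Real.exp (-Real.exp (-x / (2 * c * Δ / ε₂))))
    {ι : Type*} [DecidableEq ι] (Sbot Stop : Finset ι)
    (hcard : Stop.card ≤ c)
    (T q q' : ι → ℝ)
    (hsens : ∀ i ∈ Sbot ∪ Stop, |q i - q' i| ≤ Δ) :
    (∫ t : ℝ, f₁ t * ((∏ i ∈ Sbot, F₂ (T i + t - q i)) *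
        ∏ j ∈ Stop, (1 - F₂ (T j + t - q j)))) ≤
      Real.exp (ε₁ + ε₂) *
      (∫ t : ℝ, f₁ t * ((∏ i ∈ Sbot, F₂ (T i + t - q' i)) *
        ∏ j ∈ Stop, (1 - F₂ (T j + t - q' j)))) := by
  have hc₀ : (0 : ℝ) < c := by exact_mod_cast hc
  set β := 2 * c * Δ / ε₂
  have hβ : 0 < β := by positivity
  obtain rfl : f₁ = laplacePDF (Δ / ε₁) := funext fun t => by
    rw [hf₁, laplacePDF]; field_simp
  obtain rfl : F₂ = gumbelCDF β := funext hF₂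
  have hlap : ∀ t, laplacePDF (Δ / ε₁) t ≤ exp ε₁ * laplacePDF (Δ / ε₁) (t + Δ) := fun t => by
    have := laplacePDF_le_exp_mul (b := Δ / ε₁) (by positivity) t Δ
    rwa [abs_of_pos hΔ, div_div_cancel₀ hΔ.ne'] at this
  have hgum : ∀ x s, 0 ≤ s → s ≤ 2 * Δ →
      1 - gumbelCDF β x ≤ exp (2 * Δ / β) * (1 - gumbelCDF β (x + s)) := fun x s hs hsΔ =>
    (one_sub_gumbelCDF_le hβ hs x).trans <| mul_le_mul_of_nonneg_right
      (exp_le_exp.2 (div_le_div_of_nonneg_right hsΔ hβ.le)) (sub_nonneg.2 (gumbelCDF_le_one _ _))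
  have hcardβ : Stop.card * (2 * Δ / β) ≤ ε₂ := by
    rw [show 2 * Δ / β = ε₂ / c by simp only [β]; field_simp, mul_div_assoc', div_le_iff₀ hc₀,
      mul_comm ε₂]
    gcongr
  exact integral_mul_svtCondProb_le (laplacePDF_nonneg (by positivity))
    (integrable_of_integral_eq_one (integral_laplacePDF (by positivity))) hlap
    (gumbelCDF_monotone hβ.le) (gumbelCDF_le_one β) (gumbelCDF_nonneg β) hgum hcardβ hsens

/-- (ε₁+ε₂)-DP guarantee of SVT-Gum (Laplace threshold noise, Gumbel query noise). -/
theorem svt_gum_privacy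
    (Δ ε₁ ε₂ : ℝ) (hΔ : 0 < Δ) (hε₁ : 0 < ε₁) (hε₂ : 0 < ε₂)
    (c : ℕ) (hc : 1 ≤ c)
    (f₁ F₂ : ℝ → ℝ)
    (hf₁ : ∀ t : ℝ, f₁ t = (ε₁ / (2 * Δ)) * Real.exp (-(ε₁ * |t|) / Δ))
    (hF₂ : ∀ x : ℝ, F₂ x =
      Real.exp (-Real.exp (-x / (2 * c * Δ / ε₂))))
    {ι : Type*} [DecidableEq ι] (Sbot Stop : Finset ι) (hdisj : Disjoint Sbot Stop)
    (hcard : Stop.card ≤ c)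
    (T q q' : ι → ℝ)
    (hsens : ∀ i ∈ Sbot ∪ Stop, |q i - q' i| ≤ Δ) :
    (∫ t : ℝ, f₁ t * ((∏ i ∈ Sbot, F₂ (T i + t - q i)) *
        ∏ j ∈ Stop, (1 - F₂ (T j + t - q j)))) ≤
      Real.exp (ε₁ + ε₂) *
      (∫ t : ℝ, f₁ t * ((∏ i ∈ Sbot, F₂ (T i + t - q' i)) *
        ∏ j ∈ Stop, (1 - F₂ (T j + t - q' j)))) :=
  svt_gum_privacy_general Δ ε₁ ε₂ hΔ hε₁ hε₂ c hc f₁ F₂ hf₁ hF₂ Sbot Stop hcard T q q' hsens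
end

section
/- Let β > 0. For every x ∈ ℝ and every s ≥ 0: 1 − exp(−exp(−x/β)) ≤ exp(s/β) · (1 − exp(−exp(−(x+s)/β))). -/
open Real

/- Since exp(-(x+s)/β) = c · exp(-x/β) with c = exp(-s/β) ∈ (0, 1], the claim is
c · g(u) ≤ g(c · u) for g(t) = 1 - exp(-t), i.e. concavity of g together with g(0) = 0. -/

lemma mul_one_sub_exp_neg_le_s6 {c : ℝ} (hc₀ : 0 ≤ c) (hc₁ : c ≤ 1) (u : ℝ) :
    c * (1 - exp (-u)) ≤ 1 - exp (-(c * u)) := by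
  have hconv := convexOn_exp.2 (Set.mem_univ (-u)) (Set.mem_univ 0) hc₀ (sub_nonneg.2 hc₁)
    (add_sub_cancel c 1)
  simp only [smul_eq_mul, mul_zero, add_zero, exp_zero, mul_one, mul_neg] at hconv
  linarith

/-- Ratio bound on Gumbel survival probabilities. -/
theorem gumbel_survival_ratio (β : ℝ) (hβ : 0 < β) (x s : ℝ) (hs : 0 ≤ s) :
    1 - Real.exp (-Real.exp (-x / β)) ≤
      Real.exp (s / β) * (1 - Real.exp (-Real.exp (-(x + s) / β))) := by
  have hc₁ : exp (-s / β) ≤ 1 :=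
    exp_le_one_iff.2 (div_nonpos_of_nonpos_of_nonneg (neg_nonpos.2 hs) hβ.le)
  have hshift : exp (-(x + s) / β) = exp (-s / β) * exp (-x / β) := by
    rw [← exp_add]; ring_nf
  have hcancel : exp (s / β) * exp (-s / β) = 1 := by
    rw [← exp_add, neg_div, add_neg_cancel, exp_zero]
  calc 1 - exp (-exp (-x / β))
      = exp (s / β) * (exp (-s / β) * (1 - exp (-exp (-x / β)))) := by
        rw [← mul_assoc, hcancel, one_mul]
    _ ≤ exp (s / β) * (1 - exp (-exp (-(x + s) / β))) := by
        rw [hshift]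
        exact mul_le_mul_of_nonneg_left
          (mul_one_sub_exp_neg_le_s6 (exp_pos _).le hc₁ _) (exp_pos _).le
end

section
/- Let β > 0 and let G_β(x) = exp(−exp(−x/β)) be the Gumbel CDF with scale β and location 0. Then for all x, s ∈ ℝ: |ln(1 − G_β(x)) − ln(1 − G_β(x+s))| ≤ |s|/β. -/
/-!
With `u = exp t`, the function `t ↦ log (1 - exp (-exp t))` has derivative
`u / (exp u - 1)`, which lies in `(0, 1]` because `u + 1 ≤ exp u`; so it is `1`-Lipschitz.
The Gumbel log-survival function is this function composed with `x ↦ -x / β`.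
-/

open Real

lemma div_exp_sub_one_le_one {u : ℝ} (hu : 0 < u) : u / (exp u - 1) ≤ 1 := by
  have hlt : u + 1 < exp u := add_one_lt_exp hu.ne'
  rw [div_le_one (by linarith)]
  linarith

lemma one_sub_exp_neg_exp_pos (t : ℝ) : 0 < 1 - exp (-exp t) :=
  sub_pos.mpr (exp_lt_one_iff.mpr (neg_lt_zero.mpr (exp_pos t)))

lemma exp_exp_sub_one_pos (t : ℝ) : 0 < exp (exp t) - 1 :=
  sub_pos.mpr (one_lt_exp_iff.mpr (exp_pos t))

lemma hasDerivAt_log_one_sub_exp_neg_exp (t : ℝ) :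
    HasDerivAt (fun t => log (1 - exp (-exp t))) (exp t / (exp (exp t) - 1)) t := by
  have hsurv : HasDerivAt (fun t => 1 - exp (-exp t)) (exp (-exp t) * exp t) t := by
    simpa using ((hasDerivAt_exp t).neg.exp.const_sub 1)
  convert hsurv.log (one_sub_exp_neg_exp_pos t).ne' using 1
  have hexp : exp (-exp t) * exp (exp t) = 1 := by rw [← exp_add, neg_add_cancel, exp_zero]
  field_simp [(exp_exp_sub_one_pos t).ne', (one_sub_exp_neg_exp_pos t).ne']
  linear_combination -hexp

lemma lipschitzWith_log_one_sub_exp_neg_exp :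
    LipschitzWith 1 (fun t => log (1 - exp (-exp t))) := by
  refine lipschitzWith_of_nnnorm_deriv_le
    (fun t => (hasDerivAt_log_one_sub_exp_neg_exp t).differentiableAt) fun t => ?_
  rw [(hasDerivAt_log_one_sub_exp_neg_exp t).deriv, ← NNReal.coe_le_coe, coe_nnnorm,
    Real.norm_eq_abs, NNReal.coe_one, abs_of_nonneg]
  · exact div_exp_sub_one_le_one (exp_pos t)
  · exact div_nonneg (exp_pos t).le (exp_exp_sub_one_pos t).le

/-- Log-Lipschitz condition on the survival function of the Gumbel distribution. -/
theorem gumbel_survival_log_lipschitz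
    (β : ℝ) (hβ : 0 < β)
    (G : ℝ → ℝ)
    (hG : ∀ x : ℝ, G x = Real.exp (-Real.exp (-x / β)))
    (x s : ℝ) :
    |Real.log (1 - G x) - Real.log (1 - G (x + s))| ≤ |s| / β := by
  have h := lipschitzWith_log_one_sub_exp_neg_exp.dist_le_mul (-x / β) (-(x + s) / β)
  rw [NNReal.coe_one, one_mul, dist_eq, dist_eq,
    show -x / β - -(x + s) / β = s / β by ring, abs_div, abs_of_pos hβ] at h
  simpa only [hG] using h
end

section
/- Let Γ : ℝ → ℝ be continuous and nondecreasing with Γ(r) → 0 as r → −∞ and Γ(r) → 1 as r → +∞. Let α ≥ 0 and let k ≥ 1 be a natural number, and define p(r) = (Γ(r+α))^k · (1 − Γ(r−α)). Then p attains a maximum value on ℝ, i.e., there exists r₀ ∈ ℝ with p(r) ≤ p(r₀) for all r ∈ ℝ, and moreover p(r₀) ≥ k^k/(k+1)^{k+1}. -/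
/-!
Since `p` is continuous and tends to `0` at `±∞`, it attains a maximum as soon as it takes one
positive value. With `y = k/(k+1)`, choose `r` with `Γ r = y` by the intermediate value theorem;
monotonicity gives `Γ (r + α) ≥ y ≥ Γ (r - α)`, so `p r ≥ y^k (1 - y) = k^k/(k+1)^(k+1)`.
-/

open Filter Topology

theorem Continuous.exists_forall_ge_of_tendsto_cocompact {α β : Type*} [TopologicalSpace β]
    [LinearOrder α] [TopologicalSpace α] [OrderTopology α] {f : β → α} (hf : Continuous f)
    {L : α} (hlim : Tendsto f (cocompact β) (𝓝 L)) {x₀ : β} (hx₀ : L < f x₀) :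
    ∃ x, ∀ y, f y ≤ f x :=
  hf.exists_forall_ge' x₀ ((hlim.eventually_lt_const hx₀).mono fun _ h => h.le)

theorem pow_div_add_one_pow_succ_eq (x : ℝ) (hx : x + 1 ≠ 0) (k : ℕ) :
    x ^ k / (x + 1) ^ (k + 1) = (x / (x + 1)) ^ k * (1 - x / (x + 1)) := by
  rw [div_pow, pow_succ]
  field_simp
  ring

def svtSuccessProb (Γ : ℝ → ℝ) (α : ℝ) (k : ℕ) (r : ℝ) : ℝ :=
  Γ (r + α) ^ k * (1 - Γ (r - α))

section svtSuccessProb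

variable {Γ : ℝ → ℝ} {α : ℝ} {k : ℕ}

theorem continuous_svtSuccessProb (hΓ : Continuous Γ) : Continuous (svtSuccessProb Γ α k) := by
  unfold svtSuccessProb
  fun_prop

theorem tendsto_svtSuccessProb_atBot (hk : k ≠ 0) (hbot : Tendsto Γ atBot (𝓝 0)) :
    Tendsto (svtSuccessProb Γ α k) atBot (𝓝 0) := by
  have shift (c : ℝ) : Tendsto (fun r => Γ (r + c)) atBot (𝓝 0) :=
    hbot.comp (tendsto_atBot_add_const_right _ c tendsto_id)
  have h_sub : Tendsto (fun r => Γ (r - α)) atBot (𝓝 0) := by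
    simpa only [sub_eq_add_neg] using shift (-α)
  unfold svtSuccessProb
  simpa [zero_pow hk] using ((shift α).pow k).mul ((tendsto_const_nhds (x := (1 : ℝ))).sub h_sub)

theorem tendsto_svtSuccessProb_atTop (htop : Tendsto Γ atTop (𝓝 1)) :
    Tendsto (svtSuccessProb Γ α k) atTop (𝓝 0) := by
  have shift (c : ℝ) : Tendsto (fun r => Γ (r + c)) atTop (𝓝 1) :=
    htop.comp (tendsto_atTop_add_const_right _ c tendsto_id)
  have h_sub : Tendsto (fun r => Γ (r - α)) atTop (𝓝 1) := by
    simpa only [sub_eq_add_neg] using shift (-α)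
  unfold svtSuccessProb
  simpa using ((shift α).pow k).mul ((tendsto_const_nhds (x := (1 : ℝ))).sub h_sub)

theorem tendsto_svtSuccessProb_cocompact (hk : k ≠ 0) (hbot : Tendsto Γ atBot (𝓝 0))
    (htop : Tendsto Γ atTop (𝓝 1)) : Tendsto (svtSuccessProb Γ α k) (cocompact ℝ) (𝓝 0) := by
  rw [cocompact_eq_atBot_atTop]
  exact (tendsto_svtSuccessProb_atBot hk hbot).sup (tendsto_svtSuccessProb_atTop htop)

theorem pow_mul_one_sub_le_svtSuccessProb (hΓ : Monotone Γ) (hα : 0 ≤ α) {r y : ℝ}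
    (hr : Γ r = y) (hy₀ : 0 ≤ y) (hy₁ : y ≤ 1) : y ^ k * (1 - y) ≤ svtSuccessProb Γ α k r := by
  have above : y ≤ Γ (r + α) := hr ▸ hΓ (by linarith)
  have below : Γ (r - α) ≤ y := hr ▸ hΓ (by linarith)
  exact mul_le_mul (pow_le_pow_left₀ hy₀ above k) (by linarith) (by linarith)
    (pow_nonneg (hy₀.trans above) k)

end svtSuccessProb

/-- The SVT success probability p(r) = Γ(r+α)^k·(1−Γ(r−α)) attains a maximum on ℝ,
and the maximum is at least k^k/(k+1)^(k+1). -/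
theorem svt_success_prob_max
    (Γ : ℝ → ℝ) (hcont : Continuous Γ) (hmono : Monotone Γ)
    (hbot : Tendsto Γ atBot (nhds 0))
    (htop : Tendsto Γ atTop (nhds 1))
    (α : ℝ) (hα : 0 ≤ α) (k : ℕ) (hk : 1 ≤ k) :
    ∃ r₀ : ℝ,
      (∀ r : ℝ, (Γ (r + α)) ^ k * (1 - Γ (r - α)) ≤
        (Γ (r₀ + α)) ^ k * (1 - Γ (r₀ - α))) ∧
      (k : ℝ) ^ k / ((k : ℝ) + 1) ^ (k + 1) ≤
        (Γ (r₀ + α)) ^ k * (1 - Γ (r₀ - α)) := by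
  set y : ℝ := k / (k + 1)
  have hk₀ : (0 : ℝ) < k := by exact_mod_cast hk
  have hy₀ : 0 < y := by positivity
  have hy₁ : y < 1 := (div_lt_one (by positivity)).2 (lt_add_one _)
  obtain ⟨r, hr⟩ : y ∈ Set.range Γ := mem_range_of_exists_le_of_exists_ge hcont
    (hbot.eventually (ge_mem_nhds hy₀)).exists (htop.eventually (le_mem_nhds hy₁)).exists
  have hpr : (k : ℝ) ^ k / ((k : ℝ) + 1) ^ (k + 1) ≤ svtSuccessProb Γ α k r := by
    rw [pow_div_add_one_pow_succ_eq _ (by positivity)]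
    exact pow_mul_one_sub_le_svtSuccessProb hmono hα hr hy₀.le hy₁.le
  obtain ⟨r₀, hr₀⟩ := (continuous_svtSuccessProb hcont).exists_forall_ge_of_tendsto_cocompact
    (tendsto_svtSuccessProb_cocompact (by omega) hbot htop) (hpr.trans_lt' (by positivity))
  exact ⟨r₀, hr₀, hpr.trans (hr₀ r)⟩
end

section
/- Let A, B > 0 and define f(w) = A·(w+1)² + B·(w+1)²/w² for w > 0. Then for every w > 0: f(w) ≥ f((B/A)^{1/3}); that is, f is minimized over (0, ∞) at w = (B/A)^{1/3}. -/
/-! Writing `B = A c³`, the difference `f w - f c` factors as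
`A (w - c)² (w² + 2 (1 + c) w + c) / w²`, which is nonnegative for `w, c > 0`. -/

open Real

noncomputable def allocationVariance (A B w : ℝ) : ℝ :=
  A * (w + 1) ^ 2 + B * (w + 1) ^ 2 / w ^ 2

theorem allocationVariance_sub_allocationVariance (A c w : ℝ) (hw : w ≠ 0) :
    allocationVariance A (A * c ^ 3) w - allocationVariance A (A * c ^ 3) c
      = A * (w - c) ^ 2 * (w ^ 2 + 2 * (1 + c) * w + c) / w ^ 2 := by
  unfold allocationVariance
  field_simp
  ring

theorem allocationVariance_le {A c w : ℝ} (hA : 0 < A) (hc : 0 < c) (hw : 0 < w) :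
    allocationVariance A (A * c ^ 3) c ≤ allocationVariance A (A * c ^ 3) w := by
  rw [← sub_nonneg, allocationVariance_sub_allocationVariance A c w hw.ne']
  positivity

theorem rpow_one_div_three_pow_three {x : ℝ} (hx : 0 ≤ x) : (x ^ ((1 : ℝ) / 3)) ^ 3 = x := by
  rw [one_div]
  exact_mod_cast rpow_inv_natCast_pow hx three_ne_zero

/-- Generic privacy-budget allocation optimization: f(w) = A(w+1)² + B(w+1)²/w²
is minimized over (0,∞) at w = (B/A)^(1/3). -/
theorem budget_allocation_min
    (A B : ℝ) (hA : 0 < A) (hB : 0 < B)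
    (f : ℝ → ℝ)
    (hf : ∀ w : ℝ, f w = A * (w + 1) ^ 2 + B * (w + 1) ^ 2 / w ^ 2)
    (w : ℝ) (hw : 0 < w) :
    f ((B / A) ^ ((1 : ℝ) / 3)) ≤ f w := by
  obtain rfl : f = allocationVariance A B := funext hf
  set c : ℝ := (B / A) ^ ((1 : ℝ) / 3)
  have hc : 0 < c := rpow_pos_of_pos (div_pos hB hA) _
  have hB_eq : B = A * c ^ 3 := by
    rw [rpow_one_div_three_pow_three (div_pos hB hA).le, mul_div_cancel₀ B hA.ne']
  rw [hB_eq]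
  exact allocationVariance_le hA hc hw
end

section
/- Let Δ, ε > 0 and c > 0, and define V(w) = 2·((w+1)·Δ/ε)² + (2c·(w+1)·Δ/(w·ε))² for w > 0. Then for every w > 0: V(w) ≥ V((√2·c)^{2/3}); that is, V is minimized over (0, ∞) at w = (√2·c)^{2/3}. -/
/-!
Factor V(w) = 2 (Δ/ε)² · (w + 1)² (1 + K³/w²) with K³ = 2c², i.e. K = (√2 c)^{2/3}.
The second factor is at least (K + 1)³, with equality at w = K, because
(w + 1)² (w² + K³) - (K + 1)³ w² = (w - K)² (w² + 2(K + 1) w + K).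
-/

open Real

theorem cube_add_one_mul_sq_le {w K : ℝ} (hw : 0 ≤ w) (hK : 0 ≤ K) :
    (K + 1) ^ 3 * w ^ 2 ≤ (w + 1) ^ 2 * (w ^ 2 + K ^ 3) := by
  have key : (w + 1) ^ 2 * (w ^ 2 + K ^ 3) - (K + 1) ^ 3 * w ^ 2 =
      (w - K) ^ 2 * (w ^ 2 + 2 * (K + 1) * w + K) := by ring
  have : 0 ≤ (w - K) ^ 2 * (w ^ 2 + 2 * (K + 1) * w + K) := by positivity
  linarith

theorem cube_add_one_le_sq_add_one_mul {w K : ℝ} (hw : 0 < w) (hK : 0 ≤ K) :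
    (K + 1) ^ 3 ≤ (w + 1) ^ 2 * (1 + K ^ 3 / w ^ 2) := by
  have hw2 : 0 < w ^ 2 := by positivity
  rw [one_add_div hw2.ne', mul_div_assoc', le_div_iff₀ hw2]
  exact cube_add_one_mul_sq_le hw.le hK

theorem sq_add_one_mul_self_eq_cube {K : ℝ} (hK : 0 < K) :
    (K + 1) ^ 2 * (1 + K ^ 3 / K ^ 2) = (K + 1) ^ 3 := by
  field_simp
  ring

theorem svt_exp_allocation_min_general
    (Δ ε c : ℝ) (hc : 0 < c)
    (V : ℝ → ℝ)
    (hV : ∀ w : ℝ, V w =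
      2 * ((w + 1) * Δ / ε) ^ 2 + (2 * c * (w + 1) * Δ / (w * ε)) ^ 2)
    (w : ℝ) (hw : 0 < w) :
    V ((Real.sqrt 2 * c) ^ ((2 : ℝ) / 3)) ≤ V w := by
  set K := (√2 * c) ^ ((2 : ℝ) / 3)
  have hK : 0 < K := by positivity
  have hK3 : K ^ 3 = 2 * c ^ 2 := by
    rw [← rpow_natCast, ← rpow_mul (by positivity)]
    norm_num [mul_pow]
  have hV_factor : ∀ u, V u = 2 * (Δ / ε) ^ 2 * ((u + 1) ^ 2 * (1 + K ^ 3 / u ^ 2)) := by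
    intro u
    rw [hV, hK3]
    ring
  rw [hV_factor, hV_factor, sq_add_one_mul_self_eq_cube hK]
  exact mul_le_mul_of_nonneg_left (cube_add_one_le_sq_add_one_mul hw hK.le) (by positivity)

/-- Optimal privacy-budget allocation for SVT-Exp:
V(w) = 2((w+1)Δ/ε)² + (2c(w+1)Δ/(wε))² is minimized at w = (√2·c)^(2/3). -/
theorem svt_exp_allocation_min
    (Δ ε c : ℝ) (hΔ : 0 < Δ) (hε : 0 < ε) (hc : 0 < c)
    (V : ℝ → ℝ)
    (hV : ∀ w : ℝ, V w =
      2 * ((w + 1) * Δ / ε) ^ 2 + (2 * c * (w + 1) * Δ / (w * ε)) ^ 2)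
    (w : ℝ) (hw : 0 < w) :
    V ((Real.sqrt 2 * c) ^ ((2 : ℝ) / 3)) ≤ V w :=
  svt_exp_allocation_min_general Δ ε c hc V hV w hw
end

section
/- Let Δ, ε > 0 and c > 0, and define V(w) = 2·((w+1)·Δ/ε)² + (π²/6)·(2c·(w+1)·Δ/(w·ε))² for w > 0. Then for every w > 0: V(w) ≥ V((π·c/√3)^{2/3}); that is, V is minimized over (0, ∞) at w = (π·c/√3)^{2/3}. -/
/-!
With `t = (π c / √3) ^ (2/3)` one has `t ^ 3 = π² c² / 3`, so
`V w = 2 (Δ/ε)² · (w + 1)² (1 + t³ / w²)`. The factor depending on `w` equals `(t + 1)³` at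
`w = t`, and the identity `(w + 1)² (w² + t³) - w² (t + 1)³ = (w - t)² (w² + 2tw + 2w + t)`
shows that it is never smaller for `w > 0`.
-/

open Real

theorem rpow_two_div_three_pow_three {x : ℝ} (hx : 0 ≤ x) : (x ^ ((2 : ℝ) / 3)) ^ 3 = x ^ 2 := by
  rw [← rpow_natCast, ← rpow_mul hx]
  norm_num

theorem add_one_pow_three_le_sq_mul {t w : ℝ} (ht : 0 ≤ t) (hw : 0 < w) :
    (t + 1) ^ 3 ≤ (w + 1) ^ 2 * (1 + t ^ 3 / w ^ 2) := by
  have key : (w + 1) ^ 2 * (1 + t ^ 3 / w ^ 2) - (t + 1) ^ 3 =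
      (w - t) ^ 2 * (w ^ 2 + 2 * t * w + 2 * w + t) / w ^ 2 := by
    field_simp
    ring
  have hfac : 0 ≤ w ^ 2 + 2 * t * w + 2 * w + t := by linarith [mul_nonneg ht hw.le, sq_nonneg w]
  have : 0 ≤ (w - t) ^ 2 * (w ^ 2 + 2 * t * w + 2 * w + t) / w ^ 2 := by positivity
  linarith

theorem sq_mul_one_add_pow_three_div_sq_self (t : ℝ) :
    (t + 1) ^ 2 * (1 + t ^ 3 / t ^ 2) = (t + 1) ^ 3 := by
  rcases eq_or_ne t 0 with rfl | ht
  · norm_num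
  · field_simp
    ring

theorem svt_gum_allocation_min_general
    (Δ ε c : ℝ) (hc : 0 < c)
    (V : ℝ → ℝ)
    (hV : ∀ w : ℝ, V w =
      2 * ((w + 1) * Δ / ε) ^ 2 +
        (Real.pi ^ 2 / 6) * (2 * c * (w + 1) * Δ / (w * ε)) ^ 2)
    (w : ℝ) (hw : 0 < w) :
    V ((Real.pi * c / Real.sqrt 3) ^ ((2 : ℝ) / 3)) ≤ V w := by
  have hx : 0 ≤ π * c / √3 := by positivity
  set t := (π * c / √3) ^ ((2 : ℝ) / 3)
  have ht : 0 ≤ t := rpow_nonneg hx _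
  have ht3 : t ^ 3 = π ^ 2 * c ^ 2 / 3 := by
    rw [rpow_two_div_three_pow_three hx, div_pow, mul_pow, sq_sqrt zero_le_three]
  have hV' : ∀ u, V u = 2 * (Δ / ε) ^ 2 * ((u + 1) ^ 2 * (1 + t ^ 3 / u ^ 2)) := by
    intro u
    rw [hV, ht3]
    ring
  rw [hV', hV', sq_mul_one_add_pow_three_div_sq_self]
  gcongr
  exact add_one_pow_three_le_sq_mul ht hw

/-- Optimal privacy-budget allocation for SVT-Gum:
V(w) = 2((w+1)Δ/ε)² + (π²/6)(2c(w+1)Δ/(wε))² is minimized at w = (πc/√3)^(2/3). -/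
theorem svt_gum_allocation_min
    (Δ ε c : ℝ) (hΔ : 0 < Δ) (hε : 0 < ε) (hc : 0 < c)
    (V : ℝ → ℝ)
    (hV : ∀ w : ℝ, V w =
      2 * ((w + 1) * Δ / ε) ^ 2 +
        (Real.pi ^ 2 / 6) * (2 * c * (w + 1) * Δ / (w * ε)) ^ 2)
    (w : ℝ) (hw : 0 < w) :
    V ((Real.pi * c / Real.sqrt 3) ^ ((2 : ℝ) / 3)) ≤ V w :=
  svt_gum_allocation_min_general Δ ε c hc V hV w hw
end

section
/- Let b > 0, λ > 0, and t ≤ 0. Then ∫_{−∞}^{∞} (1/(2b))·exp(−|y|/b) · F_Exp(λ)(t+y) dy = b·exp(t/b) / (2·(1/λ + b)), where F_Exp(λ)(x) = 1 − exp(−λx) for x ≥ 0 and F_Exp(λ)(x) = 0 for x < 0. -/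
/-!
For `t ≤ 0` the exponential CDF `F(t + y)` vanishes unless `y ≥ -t ≥ 0`, and there `|y| = y`.
The integrand is then a difference of two exponentials `e^{-y/b}` and `e^{-λt} e^{-(1/b + λ) y}`
on the half-line `(-t, ∞)`, whose integrals are elementary.
-/

open MeasureTheory Real Set

theorem integral_exp_neg_mul_mul_one_sub_exp_Ioi {a c : ℝ} (ha : 0 < a) (hac : 0 < a + c)
    (t : ℝ) :
    ∫ y in Ioi (-t), exp (-a * y) * (1 - exp (-c * (t + y))) =
      exp (a * t) * c / (a * (a + c)) := by
  have hsplit : (fun y ↦ exp (-a * y) * (1 - exp (-c * (t + y)))) =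
      fun y ↦ exp (-a * y) - exp (-c * t) * exp (-(a + c) * y) := by
    funext y
    rw [mul_one_sub, ← exp_add, ← exp_add]
    ring_nf
  have hint₁ := integrableOn_exp_mul_Ioi (neg_neg_of_pos ha) (-t)
  have hint₂ := (integrableOn_exp_mul_Ioi (neg_neg_of_pos hac) (-t)).const_mul (exp (-c * t))
  rw [hsplit, integral_sub hint₁ hint₂, integral_const_mul,
    integral_exp_mul_Ioi (neg_neg_of_pos ha), integral_exp_mul_Ioi (neg_neg_of_pos hac)]
  have hexp₁ : exp (-a * -t) = exp (a * t) := by ring_nf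
  have hexp₂ : exp (-c * t) * -exp (-(a + c) * -t) = -exp (a * t) := by
    rw [mul_neg, ← exp_add]
    ring_nf
  rw [hexp₁, mul_div_assoc', hexp₂]
  field_simp
  ring

/-- CDF of the difference of an exponential and an independent Laplace random
variable, negative branch (t ≤ 0). -/
theorem exp_laplace_diff_cdf_neg
    (b lam : ℝ) (hb : 0 < b) (hlam : 0 < lam) (t : ℝ) (ht : t ≤ 0) :
    (∫ y : ℝ, (1 / (2 * b)) * Real.exp (-|y| / b) *
        (if 0 ≤ t + y then 1 - Real.exp (-lam * (t + y)) else 0)) =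
      b * Real.exp (t / b) / (2 * (1 / lam + b)) := by
  have hvanish : ∀ y ∉ Ici (-t), (1 / (2 * b)) * exp (-|y| / b) *
      (if 0 ≤ t + y then 1 - exp (-lam * (t + y)) else 0) = 0 := by
    intro y hy
    rw [if_neg (by simp only [mem_Ici, not_le] at hy; linarith), mul_zero]
  have hhalfline : EqOn (fun y ↦ (1 / (2 * b)) * exp (-|y| / b) *
      (if 0 ≤ t + y then 1 - exp (-lam * (t + y)) else 0))
      (fun y ↦ (1 / (2 * b)) * (exp (-b⁻¹ * y) * (1 - exp (-lam * (t + y))))) (Ici (-t)) := by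
    intro y (hy : -t ≤ y)
    dsimp only
    have hexponent : -y / b = -b⁻¹ * y := by ring
    rw [if_pos (by linarith), abs_of_nonneg (by linarith), hexponent, mul_assoc]
  rw [← setIntegral_eq_integral_of_forall_compl_eq_zero hvanish,
    setIntegral_congr_fun measurableSet_Ici hhalfline, integral_Ici_eq_integral_Ioi,
    integral_const_mul,
    integral_exp_neg_mul_mul_one_sub_exp_Ioi (inv_pos.2 hb) (by positivity)]
  field_simp
end

section
/- Let b > 0 and λ > 0 with b ≠ 1/λ, and let t ≥ 0. Then ∫_{−∞}^{∞} (1/(2b))·exp(−|y|/b) · F_Exp(λ)(t+y) dy = 1 + ((1/λ)²·exp(−λt)) / (b² − (1/λ)²) − (b·exp(−t/b)) / (2·(b − 1/λ)), where F_Exp(λ)(x) = 1 − exp(−λx) for x ≥ 0 and F_Exp(λ)(x) = 0 for x < 0. -/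
/-!
The integrand vanishes for `y < -t`. On `(-t, 0]` and on `(0, ∞)` the absolute value resolves
and the integrand becomes a difference of two exponentials `exp (c * y)`, each integrated in
closed form; adding the two pieces gives the formula.
-/

open MeasureTheory Real Set

theorem integral_exp_mul_of_ne_zero {c : ℝ} (hc : c ≠ 0) (a b : ℝ) :
    ∫ y in a..b, exp (c * y) = (exp (c * b) - exp (c * a)) / c := by
  rw [intervalIntegral.integral_comp_mul_left (fun y => exp y) hc, integral_exp, smul_eq_mul,
    inv_mul_eq_div]

section

variable {b lam t y : ℝ}

theorem exp_neg_abs_div_mul_one_sub_of_nonneg (hy : 0 ≤ y) :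
    exp (-|y| / b) * (1 - exp (-lam * (t + y))) =
      exp (-b⁻¹ * y) - exp (-lam * t) * exp (-(b⁻¹ + lam) * y) := by
  rw [abs_of_nonneg hy, mul_one_sub, ← exp_add, ← exp_add]
  ring_nf

theorem exp_neg_abs_div_mul_one_sub_of_nonpos (hy : y ≤ 0) :
    exp (-|y| / b) * (1 - exp (-lam * (t + y))) =
      exp (b⁻¹ * y) - exp (-lam * t) * exp ((b⁻¹ - lam) * y) := by
  rw [abs_of_nonpos hy, mul_one_sub, ← exp_add, ← exp_add]
  ring_nf

theorem integrableOn_Ioi_zero_exp_neg_abs_div_mul_one_sub (hb : 0 < b) (hlam : 0 < b⁻¹ + lam) :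
    IntegrableOn (fun y => exp (-|y| / b) * (1 - exp (-lam * (t + y)))) (Ioi 0) := by
  refine IntegrableOn.congr_fun ?_
    (fun y hy => (exp_neg_abs_div_mul_one_sub_of_nonneg hy.le).symm) measurableSet_Ioi
  exact (integrableOn_exp_mul_Ioi (by simpa using hb) 0).sub
    ((integrableOn_exp_mul_Ioi (by linarith) 0).const_mul _)

theorem integral_Ioi_zero_exp_neg_abs_div_mul_one_sub (hb : 0 < b) (hlam : 0 < b⁻¹ + lam) :
    ∫ y in Ioi 0, exp (-|y| / b) * (1 - exp (-lam * (t + y))) =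
      b - exp (-lam * t) / (b⁻¹ + lam) := by
  have hb' : -b⁻¹ < 0 := by simpa using hb
  have hlam' : -(b⁻¹ + lam) < 0 := by linarith
  rw [setIntegral_congr_fun measurableSet_Ioi
      (fun y hy => exp_neg_abs_div_mul_one_sub_of_nonneg hy.le),
    integral_sub (integrableOn_exp_mul_Ioi hb' 0)
      ((integrableOn_exp_mul_Ioi hlam' 0).const_mul _),
    integral_const_mul, integral_exp_mul_Ioi hb', integral_exp_mul_Ioi hlam']
  field_simp
  simp

theorem integral_neg_zero_exp_neg_abs_div_mul_one_sub (hb : b ≠ 0) (hlam : b⁻¹ ≠ lam)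
    (ht : 0 ≤ t) :
    ∫ y in -t..0, exp (-|y| / b) * (1 - exp (-lam * (t + y))) =
      b * (1 - exp (-t / b)) - (exp (-lam * t) - exp (-t / b)) / (b⁻¹ - lam) := by
  have hcont : ∀ c : ℝ, IntervalIntegrable (fun y => exp (c * y)) volume (-t) 0 := fun c =>
    (by fun_prop : Continuous fun y => exp (c * y)).intervalIntegrable _ _
  rw [intervalIntegral.integral_congr (fun y hy => exp_neg_abs_div_mul_one_sub_of_nonpos
      (by rw [uIcc_of_le (by linarith)] at hy; exact hy.2)),
    intervalIntegral.integral_sub (hcont _) ((hcont _).const_mul _),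
    intervalIntegral.integral_const_mul, integral_exp_mul_of_ne_zero (inv_ne_zero hb),
    integral_exp_mul_of_ne_zero (sub_ne_zero.mpr hlam)]
  simp only [mul_zero, exp_zero, mul_div_assoc', mul_sub, mul_one]
  rw [← exp_add, show b⁻¹ * -t = -t / b by ring, show -lam * t + (b⁻¹ - lam) * -t = -t / b by ring,
    div_inv_eq_mul]
  ring

end

/-- CDF of the difference of an exponential and an independent Laplace random
variable, nonnegative branch (t ≥ 0). -/
theorem exp_laplace_diff_cdf_nonneg
    (b lam : ℝ) (hb : 0 < b) (hlam : 0 < lam) (hne : b ≠ 1 / lam)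
    (t : ℝ) (ht : 0 ≤ t) :
    (∫ y : ℝ, (1 / (2 * b)) * Real.exp (-|y| / b) *
        (if 0 ≤ t + y then 1 - Real.exp (-lam * (t + y)) else 0)) =
      1 + (1 / lam) ^ 2 * Real.exp (-lam * t) / (b ^ 2 - (1 / lam) ^ 2) -
        b * Real.exp (-t / b) / (2 * (b - 1 / lam)) := by
  set φ : ℝ → ℝ := fun y => exp (-|y| / b) * (1 - exp (-lam * (t + y)))
  have hsupp : ∀ y, exp (-|y| / b) * (if 0 ≤ t + y then 1 - exp (-lam * (t + y)) else 0) =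
      (Ici (-t)).indicator φ y := fun y => by
    by_cases hy : 0 ≤ t + y
    · simp [φ, hy, show -t ≤ y by linarith]
    · simp [φ, hy, show ¬ -t ≤ y by linarith]
  have hbl : b * lam ≠ 1 := fun h => hne (by field_simp; linarith)
  have hinv : b⁻¹ ≠ lam := fun h => hbl (by rw [← h, mul_inv_cancel₀ hb.ne'])
  calc _ = 1 / (2 * b) * ((∫ y in -t..0, φ y) + ∫ y in Ioi 0, φ y) := by
        simp_rw [mul_assoc, hsupp]
        rw [integral_const_mul, integral_indicator measurableSet_Ici,
          integral_Ici_eq_integral_Ioi, intervalIntegral.integral_interval_add_Ioi'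
            ((by fun_prop : Continuous φ).intervalIntegrable _ _)
            (integrableOn_Ioi_zero_exp_neg_abs_div_mul_one_sub hb (by positivity))]
    _ = _ := by
      rw [integral_neg_zero_exp_neg_abs_div_mul_one_sub hb.ne' hinv ht,
        integral_Ioi_zero_exp_neg_abs_div_mul_one_sub hb (by positivity),
        show b ^ 2 - (1 / lam) ^ 2 = (b * lam - 1) * (b * lam + 1) / lam ^ 2 by field_simp; ring,
        show b - 1 / lam = (b * lam - 1) / lam by field_simp,
        show b⁻¹ - lam = (1 - b * lam) / b by field_simp]
      have h1 : 1 - b * lam ≠ 0 := sub_ne_zero.mpr hbl.symm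
      have h2 : b * lam - 1 ≠ 0 := sub_ne_zero.mpr hbl
      field_simp
      ring
end
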